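/- If a configuration C on the d-dimensional hypercube Q^d (d ≥ 1) is closed and has at least two distinct large vertices, then the support of C has size at least 2d. -/

import Mathlib

open Finset
/-- The `d`-dimensional hypercube: vertices are binary `d`-tuples, adjacent
exactly when they differ in one coordinate. -/
def cube (d : ℕ) : SimpleGraph (Fin d → Bool) where
  Adj x y := hammingDist x y = 1
  symm := ⟨fun (x y : Fin d → Bool) (h : hammingDist x y = 1) => by show hammingDist y x = 1; rwa [hammingDist_comm]⟩
  loopless := ⟨fun (x : Fin d → Bool) (h : hammingDist x x = 1) => by simp [hammingDist_self] at h⟩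

/-!
Closedness puts the closed neighbourhoods `N[u]` and `N[v]` of the two large vertices inside the
support, and each has `d + 1` elements. They share at most two vertices: a common neighbour
`flipAt u i = flipAt v j` of `u ≠ v` forces `u` and `v` to differ in exactly the coordinates
`i ≠ j`, so adjacent vertices have no common neighbour and non-adjacent ones at most two.
Hence the support has at least `2 (d + 1) - 2 = 2d` elements.
-/

section FlipAt

variable {ι : Type*} [DecidableEq ι]

def flipAt (x : ι → Bool) (i : ι) : ι → Bool := Function.update x i (!x i)

@[simp]
lemma flipAt_apply_self (x : ι → Bool) (i : ι) : flipAt x i i = !x i :=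
  Function.update_self ..

lemma flipAt_apply_of_ne (x : ι → Bool) {i k : ι} (h : k ≠ i) : flipAt x i k = x k :=
  Function.update_of_ne h ..

@[simp]
lemma flipAt_flipAt (x : ι → Bool) (i : ι) : flipAt (flipAt x i) i = x := by
  simp [flipAt]

lemma flipAt_injective (x : ι → Bool) : Function.Injective (flipAt x) := by
  intro i j h
  by_contra hij
  have := congrFun h i
  rw [flipAt_apply_self, flipAt_apply_of_ne x hij] at this
  exact Bool.not_ne_self _ this

variable [Fintype ι]

lemma hammingDist_eq_one_iff {x y : ι → Bool} :
    hammingDist x y = 1 ↔ ∃ i, flipAt x i = y := by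
  constructor
  · intro h
    obtain ⟨i, hi⟩ := card_eq_one.1 h
    have hdiff (k : ι) : x k ≠ y k ↔ k = i := by simpa using congrArg (k ∈ ·) hi
    refine ⟨i, funext fun k => ?_⟩
    by_cases hk : k = i
    · subst hk
      rw [flipAt_apply_self, eq_comm, Bool.eq_not]
      exact ((hdiff k).2 rfl).symm
    · rw [flipAt_apply_of_ne x hk]
      simpa using mt (hdiff k).1 hk
  · rintro ⟨i, rfl⟩
    rw [hammingDist, card_eq_one]
    refine ⟨i, ext fun k => ?_⟩
    by_cases hk : k = i
    · simp [hk]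
    · simp [hk, flipAt_apply_of_ne x hk]

lemma filter_ne_eq_pair_of_flipAt_eq {u v : ι → Bool} (huv : u ≠ v) {i j : ι}
    (h : flipAt u i = flipAt v j) : i ≠ j ∧ ({k | u k ≠ v k} : Finset ι) = {i, j} := by
  have hij : i ≠ j := by
    rintro rfl
    exact huv (by rw [← flipAt_flipAt u i, h, flipAt_flipAt])
  refine ⟨hij, ext fun k => ?_⟩
  have hk := congrFun h k
  by_cases hki : k = i
  · subst hki
    rw [flipAt_apply_self, flipAt_apply_of_ne v hij] at hk
    simp [← hk]
  by_cases hkj : k = j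
  · subst hkj
    rw [flipAt_apply_self, flipAt_apply_of_ne u hki] at hk
    simp [hk]
  rw [flipAt_apply_of_ne u hki, flipAt_apply_of_ne v hkj] at hk
  simp [hk, hki, hkj]

end FlipAt

namespace SimpleGraph

variable {V : Type*} [DecidableEq V] (G : SimpleGraph V) [G.LocallyFinite]

def closedNeighborFinset (v : V) : Finset V := insert v (G.neighborFinset v)

variable {G}

lemma card_closedNeighborFinset (v : V) : #(G.closedNeighborFinset v) = G.degree v + 1 :=
  card_insert_of_notMem (G.notMem_neighborFinset_self v)

lemma closedNeighborFinset_inter_subset (u v : V) :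
    G.closedNeighborFinset u ∩ G.closedNeighborFinset v ⊆
      {u, v} ∪ (G.neighborFinset u ∩ G.neighborFinset v) := by
  intro x
  simp only [closedNeighborFinset, mem_inter, mem_insert, mem_union, mem_singleton]
  tauto

lemma closedNeighborFinset_inter_of_not_adj {u v : V} (huv : u ≠ v) (h : ¬G.Adj u v) :
    G.closedNeighborFinset u ∩ G.closedNeighborFinset v =
      G.neighborFinset u ∩ G.neighborFinset v := by
  ext x
  simp only [closedNeighborFinset, mem_inter, mem_insert, mem_neighborFinset]
  constructor
  · rintro ⟨rfl | hux, rfl | hvx⟩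
    · exact absurd rfl huv
    · exact absurd hvx.symm h
    · exact absurd hux h
    · exact ⟨hux, hvx⟩
  · exact fun ⟨hux, hvx⟩ => ⟨Or.inr hux, Or.inr hvx⟩

lemma closedNeighborFinset_subset_support [Fintype V] {C : V → ℕ}
    (hclosed : ∀ u v, G.Adj u v → 2 ≤ C u → 0 < C v) {u : V} (hu : 2 ≤ C u) :
    G.closedNeighborFinset u ⊆ univ.filter fun x => 0 < C x := by
  intro x hx
  rw [mem_filter_univ]
  rcases mem_insert.1 hx with rfl | hx
  · omega
  · exact hclosed u x ((G.mem_neighborFinset u x).1 hx) hu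

end SimpleGraph

open SimpleGraph

instance (d : ℕ) : DecidableRel (cube d).Adj :=
  fun x y => inferInstanceAs (Decidable (hammingDist x y = 1))

section Cube

variable {d : ℕ}

lemma cube_neighborFinset (x : Fin d → Bool) :
    (cube d).neighborFinset x = univ.image (flipAt x) := by
  ext y
  simp only [mem_neighborFinset, mem_image, mem_univ, true_and]
  exact hammingDist_eq_one_iff

lemma cube_degree (x : Fin d → Bool) : (cube d).degree x = d := by
  rw [← card_neighborFinset_eq_degree, cube_neighborFinset,
    card_image_of_injective _ (flipAt_injective x), card_univ, Fintype.card_fin]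

lemma cube_neighborFinset_inter_subset {u v : Fin d → Bool} (huv : u ≠ v) :
    (cube d).neighborFinset u ∩ (cube d).neighborFinset v ⊆
      image (flipAt u) {k | u k ≠ v k} := by
  intro x hx
  simp only [cube_neighborFinset, mem_inter, mem_image, mem_univ, true_and] at hx
  obtain ⟨⟨i, rfl⟩, j, hj⟩ := hx
  refine mem_image.2 ⟨i, ?_, rfl⟩
  rw [(filter_ne_eq_pair_of_flipAt_eq huv hj.symm).2]
  exact mem_insert_self i {j}

lemma cube_hammingDist_eq_two_of_mem_inter {u v x : Fin d → Bool} (huv : u ≠ v)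
    (hx : x ∈ (cube d).neighborFinset u ∩ (cube d).neighborFinset v) : hammingDist u v = 2 := by
  simp only [cube_neighborFinset, mem_inter, mem_image, mem_univ, true_and] at hx
  obtain ⟨⟨i, rfl⟩, j, hj⟩ := hx
  obtain ⟨hij, hdiff⟩ := filter_ne_eq_pair_of_flipAt_eq huv hj.symm
  rw [hammingDist, hdiff, card_pair hij]

lemma cube_card_neighborFinset_inter_le_two {u v : Fin d → Bool} (huv : u ≠ v) :
    #((cube d).neighborFinset u ∩ (cube d).neighborFinset v) ≤ 2 := by
  rcases ((cube d).neighborFinset u ∩ (cube d).neighborFinset v).eq_empty_or_nonempty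
    with h | ⟨x, hx⟩
  · simp [h]
  calc #((cube d).neighborFinset u ∩ (cube d).neighborFinset v)
      ≤ #(image (flipAt u) {k | u k ≠ v k}) :=
        card_le_card (cube_neighborFinset_inter_subset huv)
    _ ≤ hammingDist u v := card_image_le
    _ = 2 := cube_hammingDist_eq_two_of_mem_inter huv hx

lemma cube_neighborFinset_inter_eq_empty_of_adj {u v : Fin d → Bool} (h : (cube d).Adj u v) :
    (cube d).neighborFinset u ∩ (cube d).neighborFinset v = ∅ := by
  refine eq_empty_of_forall_notMem fun x hx => ?_
  have : hammingDist u v = 2 := cube_hammingDist_eq_two_of_mem_inter h.ne hx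
  exact absurd (this.symm.trans h) (by decide)

lemma cube_card_closedNeighborFinset_inter_le_two {u v : Fin d → Bool} (huv : u ≠ v) :
    #((cube d).closedNeighborFinset u ∩ (cube d).closedNeighborFinset v) ≤ 2 := by
  by_cases h : (cube d).Adj u v
  · calc _ ≤ #({u, v} ∪ ((cube d).neighborFinset u ∩ (cube d).neighborFinset v)) :=
          card_le_card (closedNeighborFinset_inter_subset u v)
      _ ≤ 2 := by
          rw [cube_neighborFinset_inter_eq_empty_of_adj h, union_empty]
          exact card_le_two
  · rw [closedNeighborFinset_inter_of_not_adj huv h]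
    exact cube_card_neighborFinset_inter_le_two huv

end Cube

theorem closed_two_large_support_general (d : ℕ) (C : (Fin d → Bool) → ℕ)
    (hclosed : ∀ u v : Fin d → Bool, (cube d).Adj u v → 2 ≤ C u → 0 < C v)
    (hlarge : ∃ u v : Fin d → Bool, u ≠ v ∧ 2 ≤ C u ∧ 2 ≤ C v) :
    2 * d ≤ (Finset.univ.filter fun x => 0 < C x).card := by
  obtain ⟨u, v, huv, hu, hv⟩ := hlarge
  have hsupport := card_le_card <| union_subset
    (closedNeighborFinset_subset_support hclosed hu)
    (closedNeighborFinset_subset_support hclosed hv)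
  have hunion := card_union_add_card_inter
    ((cube d).closedNeighborFinset u) ((cube d).closedNeighborFinset v)
  rw [card_closedNeighborFinset, card_closedNeighborFinset, cube_degree, cube_degree] at hunion
  have hinter := cube_card_closedNeighborFinset_inter_le_two huv
  omega

/-- If a configuration `C` on `Q^d` (`d ≥ 1`) is closed (no vertex with at
least two pebbles has an empty neighbor) and has at least two distinct large
vertices (vertices with at least two pebbles), then its support has size at
least `2d`. -/
theorem closed_two_large_support (d : ℕ) (hd : 1 ≤ d) (C : (Fin d → Bool) → ℕ)
    (hclosed : ∀ u v : Fin d → Bool, (cube d).Adj u v → 2 ≤ C u → 0 < C v)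
    (hlarge : ∃ u v : Fin d → Bool, u ≠ v ∧ 2 ≤ C u ∧ 2 ≤ C v) :
    2 * d ≤ (Finset.univ.filter fun x => 0 < C x).card :=
  closed_two_large_support_general d C hclosed hlarge
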